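/- arXiv:0904.4727 — 2 statements merged into one kernel-verified Lean document; each statement's English description precedes it below -/
import Mathlib

section
/- Let A = (A_d, A_c) be a c-atom and I an interpretation. I satisfies A (i.e., I ∩ A_d ∈ A_c) if and only if the abstract representation A_c* contains an abstract prefixed power set W⊎V covering I ∩ A_d. -/
variable {α : Type*} [DecidableEq α]

/-- `S` is covered by the prefixed power set `W ⊎ V`. -/
def covers (W V S : Finset α) : Prop := W ⊆ S ∧ S ⊆ W ∪ V

/-- `I ⊎ J` is included in `W ⊎ V`. -/
def included (I J W V : Finset α) : Prop := ∀ S : Finset α, covers I J S → covers W V S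

/-- `W ⊎ V` is a prefixed power set of the c-atom `(Ad, Ac)` all of whose
covered sets are admissible solutions. -/
def goodPPS (Ad : Finset α) (Ac : Set (Finset α)) (W V : Finset α) : Prop :=
  W ∈ Ac ∧ V ⊆ Ad \ W ∧ ∀ T : Finset α, W ⊆ T → T ⊆ W ∪ V → T ∈ Ac

/-- `W ⊎ V` is `W`-maximal in the c-atom `(Ad, Ac)`. -/
def maximalPPS (Ad : Finset α) (Ac : Set (Finset α)) (W V : Finset α) : Prop :=
  goodPPS Ad Ac W V ∧ ∀ V' : Finset α, V ⊂ V' → V' ⊆ Ad \ W → ¬ goodPPS Ad Ac W V'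

/-- The abstract representation `A_c*` of the c-atom `(Ad, Ac)`: all maximal
prefixed power sets, with redundant ones (those included in a distinct maximal
prefixed power set) removed. -/
def absRep (Ad : Finset α) (Ac : Set (Finset α)) : Set (Finset α × Finset α) :=
  {p | maximalPPS Ad Ac p.1 p.2 ∧
    ∀ q : Finset α × Finset α, maximalPPS Ad Ac q.1 q.2 → q ≠ p →
      ¬ included p.1 p.2 q.1 q.2}

/-! A set `S ∈ Ac` is covered by the good prefixed power set `S ⊎ ∅`, which grows to a maximal
one `S ⊎ V`. Inclusion into a different prefixed power set strictly enlarges the free part, so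
among the maximal prefixed power sets including `S ⊎ V` one with the largest free part is
non-redundant, and it still covers `S`. Conversely every set covered by a good prefixed power
set lies in `Ac`. -/

variable {Ad : Finset α} {Ac : Set (Finset α)} {W V : Finset α}

lemma covers_self (W V : Finset α) : covers W V W :=
  ⟨subset_rfl, Finset.subset_union_left⟩

lemma included.trans {W₁ V₁ W₂ V₂ W₃ V₃ : Finset α} (h₁ : included W₁ V₁ W₂ V₂)
    (h₂ : included W₂ V₂ W₃ V₃) : included W₁ V₁ W₃ V₃ :=
  fun S hS => h₂ S (h₁ S hS)

lemma goodPPS.mem_of_covers {S : Finset α} (h : goodPPS Ad Ac W V) (hS : covers W V S) :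
    S ∈ Ac :=
  h.2.2 S hS.1 hS.2

lemma goodPPS.disjoint (h : goodPPS Ad Ac W V) : Disjoint W V :=
  Finset.disjoint_of_subset_right h.2.1 Finset.disjoint_sdiff

lemma goodPPS_empty (hW : W ∈ Ac) : goodPPS Ad Ac W ∅ := by
  refine ⟨hW, Finset.empty_subset _, fun T hWT hTW => ?_⟩
  rwa [subset_antisymm (by simpa using hTW) hWT]

lemma exists_maximalPPS_of_goodPPS (h : goodPPS Ad Ac W V) :
    ∃ V', V ⊆ V' ∧ maximalPPS Ad Ac W V' := by
  have hfin : {V' | goodPPS Ad Ac W V'}.Finite :=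
    (Ad \ W).powerset.finite_toSet.subset fun V' hV' => Finset.mem_powerset.2 hV'.2.1
  obtain ⟨V', hVV', hmax⟩ := hfin.exists_le_maximal h
  exact ⟨V', hVV', hmax.1, fun V'' hlt _ hgood => hmax.not_gt hgood hlt⟩

lemma included.ssubset {W' V' : Finset α} (hWV : Disjoint W V) (h : included W V W' V')
    (hne : (W', V') ≠ (W, V)) : V ⊂ V' := by
  have hW' : W' ⊆ W := (h W (covers_self W V)).1
  have hWV' : W ∪ V ⊆ W' ∪ V' := (h (W ∪ V) ⟨Finset.subset_union_left, subset_rfl⟩).2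
  have hVV' : V ⊆ V' := fun a ha => by
    rcases Finset.mem_union.1 (hWV' (Finset.mem_union_right W ha)) with haW' | haV'
    · exact absurd (hW' haW') (Finset.disjoint_right.1 hWV ha)
    · exact haV'
  refine hVV'.ssubset_of_ne fun hV => hne ?_
  subst hV
  have hWW' : W ⊆ W' := fun a ha => by
    rcases Finset.mem_union.1 (hWV' (Finset.mem_union_left V ha)) with haW' | haV
    · exact haW'
    · exact absurd ha (Finset.disjoint_right.1 hWV haV)
  rw [subset_antisymm hW' hWW']

lemma exists_mem_absRep_included (h : maximalPPS Ad Ac W V) :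
    ∃ r ∈ absRep Ad Ac, included W V r.1 r.2 := by
  set T := {q : Finset α × Finset α | maximalPPS Ad Ac q.1 q.2 ∧ included W V q.1 q.2}
  have hfin : T.Finite := by
    refine (W.powerset ×ˢ Ad.powerset).finite_toSet.subset fun q hq => ?_
    simp only [Finset.coe_product, Set.mem_prod, Finset.mem_coe, Finset.mem_powerset]
    exact ⟨(hq.2 W (covers_self W V)).1, hq.1.1.2.1.trans Finset.sdiff_subset⟩
  obtain ⟨r, ⟨hr, hWVr⟩, hrmax⟩ :=
    Set.exists_max_image T (fun q => q.2.card) hfin ⟨(W, V), h, fun _ hS => hS⟩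
  refine ⟨r, ⟨hr, fun q hq hne hrq => ?_⟩, hWVr⟩
  have hlt := Finset.card_lt_card (hrq.ssubset hr.1.disjoint hne)
  exact (hrmax q ⟨hq, hWVr.trans hrq⟩).not_gt hlt

theorem stmt_4_general (Ad : Finset α) (Ac : Set (Finset α))
    (I : Finset α) :
    I ∩ Ad ∈ Ac ↔ ∃ p ∈ absRep Ad Ac, covers p.1 p.2 (I ∩ Ad) := by
  constructor
  · intro hS
    obtain ⟨V, -, hmax⟩ := exists_maximalPPS_of_goodPPS (goodPPS_empty (Ad := Ad) hS)
    obtain ⟨r, hr, hincl⟩ := exists_mem_absRep_included hmax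
    exact ⟨r, hr, hincl _ (covers_self _ _)⟩
  · rintro ⟨r, hr, hcov⟩
    exact hr.1.1.mem_of_covers hcov

theorem stmt_4 (Ad : Finset α) (Ac : Set (Finset α)) (hAc : ∀ S ∈ Ac, S ⊆ Ad)
    (I : Finset α) :
    I ∩ Ad ∈ Ac ↔ ∃ p ∈ absRep Ad Ac, covers p.1 p.2 (I ∩ Ad) :=
  stmt_4_general Ad Ac I
end

section
/- Let A be a c-atom and M a set of atoms. M satisfies A (M ∩ A_d ∈ A_c) if and only if there exists W⊎V ∈ A_c* such that W ⊆ M and (A_d \ (W ∪ V)) ∩ M = ∅. -/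
variable {α : Type*} [DecidableEq α]

theorem covers_inter_iff {W V M Ad : Finset α} (hW : W ⊆ Ad) :
    covers W V (M ∩ Ad) ↔ W ⊆ M ∧ (Ad \ (W ∪ V)) ∩ M = ∅ := by
  rw [covers, Finset.subset_inter_iff, and_iff_left hW, Finset.inter_comm M,
    ← Finset.sdiff_eq_empty_iff_subset (s := Ad ∩ M), Finset.sdiff_inter_right_comm]

theorem stmt_10_general (Ad : Finset α) (Ac : Set (Finset α))
    (Astar : Set (Finset α × Finset α))
    (hdisj : ∀ p ∈ Astar, Disjoint p.1 p.2 ∧ p.1 ⊆ Ad ∧ p.2 ⊆ Ad)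
    (hsound : ∀ p ∈ Astar, ∀ T : Finset α, p.1 ⊆ T → T ⊆ p.1 ∪ p.2 → T ∈ Ac)
    (hcomplete : ∀ S ∈ Ac, ∃ p ∈ Astar, p.1 ⊆ S ∧ S ⊆ p.1 ∪ p.2)
    (M : Finset α) :
    M ∩ Ad ∈ Ac ↔ ∃ p ∈ Astar, p.1 ⊆ M ∧ (Ad \ (p.1 ∪ p.2)) ∩ M = ∅ := by
  constructor
  · intro hM
    obtain ⟨p, hp, hcov⟩ := hcomplete _ hM
    exact ⟨p, hp, (covers_inter_iff (hdisj p hp).2.1).1 hcov⟩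
  · rintro ⟨p, hp, hpM⟩
    obtain ⟨hW, hWV⟩ := (covers_inter_iff (hdisj p hp).2.1).2 hpM
    exact hsound p hp _ hW hWV

theorem stmt_10 (Ad : Finset α) (Ac : Set (Finset α)) (hAc : ∀ S ∈ Ac, S ⊆ Ad)
    (Astar : Set (Finset α × Finset α))
    (hdisj : ∀ p ∈ Astar, Disjoint p.1 p.2 ∧ p.1 ⊆ Ad ∧ p.2 ⊆ Ad)
    (hsound : ∀ p ∈ Astar, ∀ T : Finset α, p.1 ⊆ T → T ⊆ p.1 ∪ p.2 → T ∈ Ac)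
    (hcomplete : ∀ S ∈ Ac, ∃ p ∈ Astar, p.1 ⊆ S ∧ S ⊆ p.1 ∪ p.2)
    (M : Finset α) :
    M ∩ Ad ∈ Ac ↔ ∃ p ∈ Astar, p.1 ⊆ M ∧ (Ad \ (p.1 ∪ p.2)) ∩ M = ∅ :=
  stmt_10_general Ad Ac Astar hdisj hsound hcomplete M
end
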